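/- Let P be a poset with least element 0 and Z(P)^× ≠ ∅. Then Ann(P) = Max(𝔄), i.e., the annihilator prime ideals of P are exactly the maximal elements (under set inclusion) of the family 𝔄 := {ann(x) : x ∈ P\{0}}. In particular, if P satisfies the ascending chain condition for annihilators, then Ann(P) ≠ ∅. -/

import Mathlib

/-- `L(x,y) = {z : z ≤ x ∧ z ≤ y}`, where the least element `0` of the poset is `⊥`. -/
def LSet (P : Type*) [PartialOrder P] [OrderBot P] (x y : P) : Set P := {z | z ≤ x ∧ z ≤ y}

theorem LSet_comm (P : Type*) [PartialOrder P] [OrderBot P] (x y : P) :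
    LSet P x y = LSet P y x := by
  ext z; exact ⟨fun h => ⟨h.2, h.1⟩, fun h => ⟨h.2, h.1⟩⟩

/-- The annihilator of `x`: `ann(x) = {y : L(x,y) = {0}}`. -/
def ann (P : Type*) [PartialOrder P] [OrderBot P] (x : P) : Set P := {y | LSet P x y = {⊥}}

theorem mem_ann_comm (P : Type*) [PartialOrder P] [OrderBot P] (x y : P) :
    y ∈ ann P x ↔ x ∈ ann P y := by
  simp only [ann, Set.mem_setOf_eq, LSet_comm P x y]

/-- The set `Z(P)^× = Z(P) \ {0}` of nonzero zero-divisors of `P`. -/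
def ZDivX (P : Type*) [PartialOrder P] [OrderBot P] : Set P :=
  {x | x ≠ ⊥ ∧ ∃ y : P, y ≠ ⊥ ∧ LSet P x y = {⊥}}

/-- The zero-divisor graph `Γ(P)` on `Z(P)^×`. -/
def zdGraph (P : Type*) [PartialOrder P] [OrderBot P] : SimpleGraph (ZDivX P) where
  Adj a b := (a : P) ≠ (b : P) ∧ LSet P a b = {⊥}
  symm := by
    refine ⟨?_⟩; rintro a b ⟨h1, h2⟩
    exact ⟨fun h => h1 h.symm, by rw [LSet_comm]; exact h2⟩
  loopless := by refine ⟨?_⟩; rintro a ⟨h1, _⟩; exact h1 rfl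

/-- The equivalence `x ∼ y ↔ ann(x) = ann(y)` on `Z(P)^×`. -/
def annSetoid (P : Type*) [PartialOrder P] [OrderBot P] : Setoid (ZDivX P) where
  r a b := ann P a = ann P b
  iseqv := ⟨fun _ => rfl, Eq.symm, Eq.trans⟩

/-- The reduced zero-divisor graph `Γ_E(P)`, on equivalence classes of `Z(P)^×`. -/
def redGraph (P : Type*) [PartialOrder P] [OrderBot P] :
    SimpleGraph (Quotient (annSetoid P)) where
  Adj := Quotient.lift₂ (fun a b => LSet P (a : P) (b : P) = {⊥}) (by
    intro a b a' b' ha hb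
    have ha' : ann P (a : P) = ann P (a' : P) := ha
    have hb' : ann P (b : P) = ann P (b' : P) := hb
    apply propext
    constructor
    · intro h
      have h1 : (b : P) ∈ ann P (a : P) := h
      rw [ha', mem_ann_comm, hb', mem_ann_comm] at h1
      exact h1
    · intro h
      have h1 : (b' : P) ∈ ann P (a' : P) := h
      rw [← ha', mem_ann_comm, ← hb', mem_ann_comm] at h1
      exact h1)
  symm := by
    refine ⟨?_⟩; intro x y
    refine Quotient.inductionOn₂ x y ?_
    intro a b h
    have h' : LSet P (a : P) (b : P) = {⊥} := h
    show LSet P (b : P) (a : P) = {⊥}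
    rw [LSet_comm]; exact h'
  loopless := by
    refine ⟨?_⟩; intro x
    refine Quotient.inductionOn x ?_
    intro a h
    have h' : LSet P (a : P) (a : P) = {⊥} := h
    have hm : (a : P) ∈ LSet P (a : P) (a : P) := ⟨le_refl _, le_refl _⟩
    rw [h'] at hm
    exact a.2.1 hm
/-- `I` is an ideal of the poset `P`: a nonempty downward-closed subset. -/
def IsIdeal (P : Type*) [PartialOrder P] [OrderBot P] (I : Set P) : Prop :=
  I.Nonempty ∧ ∀ x ∈ I, ∀ y : P, y ≤ x → y ∈ I

/-- `I` is a prime ideal of the poset `P`: a proper ideal such that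
`L(x,y) ⊆ I` implies `x ∈ I` or `y ∈ I`. -/
def IsPrimeIdeal (P : Type*) [PartialOrder P] [OrderBot P] (I : Set P) : Prop :=
  IsIdeal P I ∧ I ≠ Set.univ ∧ ∀ x y : P, LSet P x y ⊆ I → x ∈ I ∨ y ∈ I

/-- The family `𝔄 = {ann(x) : x ∈ P \ {0}}`. -/
def AnnFam (P : Type*) [PartialOrder P] [OrderBot P] : Set (Set P) :=
  {I | ∃ x : P, x ≠ ⊥ ∧ ann P x = I}

/-- `Ann(P)`, the set of annihilator prime ideals of `P`. -/
def AnnPrimes (P : Type*) [PartialOrder P] [OrderBot P] : Set (Set P) :=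
  {I | IsPrimeIdeal P I ∧ ∃ x : P, ann P x = I}

/-- `P` satisfies the ACC for annihilators: every nonempty subfamily of `𝔄` has a
maximal element. -/
def ACCAnn (P : Type*) [PartialOrder P] [OrderBot P] : Prop :=
  ∀ S : Set (Set P), S ⊆ AnnFam P → S.Nonempty → ∃ I ∈ S, ∀ J ∈ S, I ⊆ J → I = J

/-! Since `⊥` lies in every annihilator, a prime annihilator `ann x` containing `ann y` for
`y ≠ ⊥` must contain `L(y, w)` for every `w ∈ ann y`, hence `w` (as `y ∉ ann y`): it is maximal.
Conversely, if `ann x` is maximal and `a ∉ ann x`, pick `v ≠ ⊥` below `x` and `a`; then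
`ann v = ann x` by maximality, and `L(a, b) ⊆ ann x` forces `b ∈ ann v`. -/

section Annihilator

variable {P : Type*} [PartialOrder P] [OrderBot P]

theorem LSet_eq_singleton_bot_iff {x y : P} :
    LSet P x y = {⊥} ↔ ∀ z, z ≤ x → z ≤ y → z = ⊥ := by
  refine ⟨fun h z hzx hzy => h.subset ⟨hzx, hzy⟩, fun h => ?_⟩
  ext z
  refine ⟨fun hz => h z hz.1 hz.2, ?_⟩
  rintro rfl
  exact ⟨bot_le, bot_le⟩

theorem mem_ann_iff {x y : P} : y ∈ ann P x ↔ ∀ z, z ≤ x → z ≤ y → z = ⊥ :=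
  LSet_eq_singleton_bot_iff

theorem bot_mem_ann (x : P) : ⊥ ∈ ann P x :=
  mem_ann_iff.2 fun _ _ hz => le_bot_iff.1 hz

theorem ann_bot : ann P ⊥ = Set.univ :=
  Set.eq_univ_of_forall fun _ => mem_ann_iff.2 fun _ hz _ => le_bot_iff.1 hz

theorem ann_anti {v x : P} (hvx : v ≤ x) : ann P x ⊆ ann P v :=
  fun _ hy => mem_ann_iff.2 fun z hzv hzy => mem_ann_iff.1 hy z (hzv.trans hvx) hzy

theorem eq_bot_of_mem_ann_of_le {x z : P} (hz : z ∈ ann P x) (hzx : z ≤ x) : z = ⊥ :=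
  mem_ann_iff.1 hz z hzx le_rfl

theorem self_notMem_ann {x : P} (hx : x ≠ ⊥) : x ∉ ann P x :=
  fun h => hx (eq_bot_of_mem_ann_of_le h le_rfl)

theorem ann_ne_univ {x : P} (hx : x ≠ ⊥) : ann P x ≠ Set.univ :=
  fun h => self_notMem_ann hx (h ▸ Set.mem_univ x)

theorem isIdeal_ann (x : P) : IsIdeal P (ann P x) := by
  refine ⟨⟨⊥, bot_mem_ann x⟩, fun y hy w hwy => ?_⟩
  rw [mem_ann_comm] at hy ⊢
  exact ann_anti hwy hy

theorem exists_ne_bot_le_of_notMem_ann {x a : P} (ha : a ∉ ann P x) :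
    ∃ v, v ≤ x ∧ v ≤ a ∧ v ≠ ⊥ := by
  contrapose! ha
  exact mem_ann_iff.2 ha

theorem ann_eq_of_isPrimeIdeal_of_subset {x y : P} (hprime : IsPrimeIdeal P (ann P x))
    (hy : y ≠ ⊥) (hxy : ann P x ⊆ ann P y) : ann P x = ann P y := by
  refine hxy.antisymm fun w hw => ?_
  have hL : LSet P y w ⊆ ann P x := by
    rw [show LSet P y w = {⊥} from hw, Set.singleton_subset_iff]
    exact bot_mem_ann x
  exact (hprime.2.2 y w hL).resolve_left fun hyx => self_notMem_ann hy (hxy hyx)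

theorem isPrimeIdeal_ann_of_maximal {x : P} (hx : x ≠ ⊥)
    (hmax : ∀ y, y ≠ ⊥ → ann P x ⊆ ann P y → ann P x = ann P y) :
    IsPrimeIdeal P (ann P x) := by
  refine ⟨isIdeal_ann x, ann_ne_univ hx, fun a b hab => or_iff_not_imp_left.2 fun ha => ?_⟩
  obtain ⟨v, hvx, hva, hv⟩ := exists_ne_bot_le_of_notMem_ann ha
  rw [hmax v hv (ann_anti hvx)]
  refine mem_ann_iff.2 fun z hzv hzb => eq_bot_of_mem_ann_of_le ?_ (hzv.trans hvx)
  exact hab ⟨hzv.trans hva, hzb⟩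

end Annihilator

/-- `Ann(P) = Max(𝔄)`; in particular, if `P` satisfies the ACC for annihilators,
then `Ann(P) ≠ ∅`. -/
theorem stmt9 (P : Type*) [PartialOrder P] [OrderBot P] (hZ : (ZDivX P).Nonempty) :
    AnnPrimes P = {I ∈ AnnFam P | ∀ J ∈ AnnFam P, I ⊆ J → I = J} ∧
      (ACCAnn P → (AnnPrimes P).Nonempty) := by
  have hAnnPrimes : AnnPrimes P = {I ∈ AnnFam P | ∀ J ∈ AnnFam P, I ⊆ J → I = J} := by
    ext I
    constructor
    · rintro ⟨hprime, x, rfl⟩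
      have hx : x ≠ ⊥ := by
        rintro rfl
        exact hprime.2.1 ann_bot
      exact ⟨⟨x, hx, rfl⟩, fun _ ⟨y, hy, hJ⟩ => hJ ▸ ann_eq_of_isPrimeIdeal_of_subset hprime hy⟩
    · rintro ⟨⟨x, hx, rfl⟩, hmax⟩
      exact ⟨isPrimeIdeal_ann_of_maximal hx fun y hy => hmax _ ⟨y, hy, rfl⟩, x, rfl⟩
  refine ⟨hAnnPrimes, fun hACC => ?_⟩
  obtain ⟨x, hx, -⟩ := hZ
  obtain ⟨I, hI, hImax⟩ := hACC (AnnFam P) subset_rfl ⟨ann P x, x, hx, rfl⟩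
  exact ⟨I, hAnnPrimes ▸ ⟨hI, hImax⟩⟩
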